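/- arXiv:2407.01152 — 4 statements merged into one kernel-verified Lean document; each statement's English description precedes it below -/
import Mathlib

section
/- (a) 𝒫(t)(ξ_0) = ξ_0 + ξ_1·t + ξ_0^q·t². (b) 𝒫(t)(ξ_1) = ξ_1 + 2ξ_0^q·t + ξ_2·t^q + ξ_1^q·t^{q+1}. (c) For every integer i > 1, 𝒫(t)(ξ_i) = ξ_i + ξ_{i−1}^q·t + ξ_{i+1}·t^{q^i} + ξ_i^q·t^{q^i+1}. -/
open MvPolynomial

noncomputable section

namespace OPlus

variable (F : Type) [Field F] [Fintype F]

/-- The variable `y_{j+1}` (1-based `y_1,…,y_m`) among the `2m` variables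
`(y_1,…,y_m,x_m,…,x_1)`. -/
def yvar (m : ℕ) (j : Fin m) : Fin (2*m) :=
  ⟨j.val, by have := j.isLt; omega⟩

/-- The variable `x_{j+1}` (1-based `x_1,…,x_m`) among the `2m` variables
`(y_1,…,y_m,x_m,…,x_1)`. -/
def xvar (m : ℕ) (j : Fin m) : Fin (2*m) :=
  ⟨2*m - 1 - j.val, by have := j.isLt; omega⟩

/-- The invariants `ξ_i`; `ξ_0 = Σ y_j x_j` and
`ξ_i = Σ (y_j^{q^i} x_j + y_j x_j^{q^i})` for `i > 0`. -/
def xi (m q i : ℕ) : MvPolynomial (Fin (2*m)) F :=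
  if i = 0 then ∑ j : Fin m, X (yvar m j) * X (xvar m j)
  else ∑ j : Fin m, (X (yvar m j) ^ q ^ i * X (xvar m j) + X (yvar m j) * X (xvar m j) ^ q ^ i)

/-- The right action of a matrix on polynomials: each variable is sent to the
corresponding entry of the row vector of variables multiplied by `g` on the right. -/
def act (m : ℕ) (g : Matrix (Fin (2*m)) (Fin (2*m)) F) :
    MvPolynomial (Fin (2*m)) F →ₐ[F] MvPolynomial (Fin (2*m)) F :=
  aeval (fun i => ∑ k : Fin (2*m), C (g k i) * X k)

/-- The orthogonal group `O⁺_{2m}(q)` of plus type, as a set of matrices. -/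
def Gset (m q : ℕ) : Set (Matrix (Fin (2*m)) (Fin (2*m)) F) :=
  {g | IsUnit g ∧ act F m g (xi F m q 0) = xi F m q 0}

/-- The Sylow `p`-subgroup `P` of `G`: upper-triangular unipotent elements. -/
def Pset (m q : ℕ) : Set (Matrix (Fin (2*m)) (Fin (2*m)) F) :=
  {g | g ∈ Gset F m q ∧ (∀ i j : Fin (2*m), j < i → g i j = 0) ∧ ∀ i, g i i = 1}

/-- `N(v)`: the product of the distinct elements of the `P`-orbit of `v`. -/
def Norb (m q : ℕ) (v : MvPolynomial (Fin (2*m)) F) : MvPolynomial (Fin (2*m)) F :=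
  ∏ᶠ w ∈ {w | ∃ g ∈ Pset F m q, act F m g v = w}, w

/-- `u_m = ∏_{j=1}^m N(y_j) N(x_j)`. -/
def uPoly (m q : ℕ) : MvPolynomial (Fin (2*m)) F :=
  ∏ j : Fin m, (Norb F m q (X (yvar m j)) * Norb F m q (X (xvar m j)))

/-- The complete Steenrod operator `𝒫(t) : S → S[t]`, `v ↦ v + v^q t` on linear forms. -/
def steenrod (m q : ℕ) :
    MvPolynomial (Fin (2*m)) F →ₐ[F] Polynomial (MvPolynomial (Fin (2*m)) F) :=
  aeval (fun i => Polynomial.C (X i) + Polynomial.C (X i ^ q) * Polynomial.X)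

/-- The Steenrod operation `𝒫^i(f)`: the coefficient of `t^i` in `𝒫(t)(f)`. -/
def sP (m q i : ℕ) (f : MvPolynomial (Fin (2*m)) F) : MvPolynomial (Fin (2*m)) F :=
  (steenrod F m q f).coeff i

/-- `e(i,m) = Σ_{j=1}^i q^{2m-1-j}`. -/
def eExp (m q i : ℕ) : ℕ := ∑ j ∈ Finset.Icc 1 i, q ^ (2*m - 1 - j)

/-- `ψ : S → S[t]`, `v ↦ v^q − v t^{q−1}` on linear forms. -/
def psi (m q : ℕ) :
    MvPolynomial (Fin (2*m)) F →ₐ[F] Polynomial (MvPolynomial (Fin (2*m)) F) :=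
  aeval (fun i => Polynomial.C (X i ^ q) - Polynomial.C (X i) * Polynomial.X ^ (q-1))

end OPlus

open OPlus

section AuxFrob
variable {R : Type*} [CommRing R] {p q : ℕ} [Fact p.Prime] [CharP R p]

lemma aux_add_pow (hq : ∃ s, q = p ^ s) (a b : R) : (a + b) ^ q = a ^ q + b ^ q := by
  obtain ⟨s, rfl⟩ := hq; exact add_pow_char_pow ..

lemma aux_sum_pow (hq : ∃ s, q = p ^ s) {ι : Type*} (t : Finset ι) (f : ι → R) :
    (∑ j ∈ t, f j) ^ q = ∑ j ∈ t, f j ^ q := by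
  obtain ⟨s, rfl⟩ := hq
  exact sum_pow_char_pow p s t f

end AuxFrob

variable (F : Type) [Field F] [Fintype F]

/-- the action of the complete Steenrod operator on the `ξ_i`. -/
theorem statement_2
    (p : ℕ) (hp : p.Prime) (hodd : Odd p)
    [CharP F p]
    (q : ℕ) (hq : q = Fintype.card F)
    (m : ℕ) (hm : 1 ≤ m) :
    steenrod F m q (xi F m q 0)
      = Polynomial.C (xi F m q 0) + Polynomial.C (xi F m q 1) * Polynomial.X
          + Polynomial.C (xi F m q 0 ^ q) * Polynomial.X ^ 2 ∧
    steenrod F m q (xi F m q 1)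
      = Polynomial.C (xi F m q 1) + Polynomial.C (2 * xi F m q 0 ^ q) * Polynomial.X
          + Polynomial.C (xi F m q 2) * Polynomial.X ^ q
          + Polynomial.C (xi F m q 1 ^ q) * Polynomial.X ^ (q + 1) ∧
    (∀ i : ℕ, 1 < i →
      steenrod F m q (xi F m q i)
        = Polynomial.C (xi F m q i) + Polynomial.C (xi F m q (i-1) ^ q) * Polynomial.X
            + Polynomial.C (xi F m q (i+1)) * Polynomial.X ^ (q ^ i)
            + Polynomial.C (xi F m q i ^ q) * Polynomial.X ^ (q ^ i + 1)) := by
  haveI : Fact p.Prime := ⟨hp⟩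
  obtain ⟨s, -, hcard⟩ := FiniteField.card F p
  have hqex : ∃ s : ℕ, q = p ^ s := ⟨s, hq.trans hcard⟩
  set R := MvPolynomial (Fin (2*m)) F
  have hqexi : ∀ i : ℕ, ∃ s : ℕ, q ^ i = p ^ s := by
    obtain ⟨s, rfl⟩ := hqex
    exact fun i => ⟨s * i, (pow_mul p s i).symm⟩
  -- steenrod on a single variable
  have st1 : ∀ v : Fin (2*m), steenrod F m q (X v)
      = Polynomial.C (X v) + Polynomial.C (X v ^ q) * Polynomial.X := fun v => by
    simp [steenrod]
  have stX : ∀ (v : Fin (2*m)) (i : ℕ),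
      steenrod F m q (X v ^ q ^ i)
        = Polynomial.C (X v ^ q ^ i) + Polynomial.C (X v ^ q ^ (i+1)) * Polynomial.X ^ q ^ i := by
    intro v i
    obtain ⟨s', hs'⟩ := hqexi i
    rw [map_pow, st1, hs', add_pow_char_pow, mul_pow, ← map_pow, ← map_pow, ← hs',
      ← pow_mul, ← pow_succ']
  have hpowq : ∀ (v : Fin (2*m)) (i : ℕ), (X (R := F) v ^ q ^ i) ^ q = X v ^ q ^ (i+1) := by
    intro v i; rw [← pow_mul, ← pow_succ]
  -- q-th power of a summand of xi
  have hqterm : ∀ (j : Fin m) (i : ℕ),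
      (X (R := F) (yvar m j) ^ q ^ i * X (xvar m j) + X (yvar m j) * X (xvar m j) ^ q ^ i) ^ q
        = X (yvar m j) ^ q ^ (i+1) * X (xvar m j) ^ q
          + X (yvar m j) ^ q * X (xvar m j) ^ q ^ (i+1) := by
    intro j i
    rw [aux_add_pow (p := p) hqex, mul_pow, mul_pow, hpowq, hpowq]
  have key : ∀ i : ℕ,
      steenrod F m q (xi F m q (i+1))
        = Polynomial.C (xi F m q (i+1))
          + Polynomial.C (∑ j : Fin m, (X (yvar m j) ^ q ^ (i+1) * X (xvar m j) ^ q
              + X (yvar m j) ^ q * X (xvar m j) ^ q ^ (i+1))) * Polynomial.X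
          + Polynomial.C (xi F m q (i+2)) * Polynomial.X ^ q ^ (i+1)
          + Polynomial.C (xi F m q (i+1) ^ q) * Polynomial.X ^ (q ^ (i+1) + 1) := by
    intro i
    rw [show xi F m q (i+1) = ∑ j : Fin m, (X (yvar m j) ^ q ^ (i+1) * X (xvar m j)
        + X (yvar m j) * X (xvar m j) ^ q ^ (i+1)) from if_neg (by omega),
      show xi F m q (i+2) = ∑ j : Fin m, (X (yvar m j) ^ q ^ (i+2) * X (xvar m j)
        + X (yvar m j) * X (xvar m j) ^ q ^ (i+2)) from if_neg (by omega),
      aux_sum_pow (p := p) hqex]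
    simp only [map_sum, map_add, map_mul, stX, st1, hqterm, Finset.sum_mul]
    rw [← Finset.sum_add_distrib, ← Finset.sum_add_distrib, ← Finset.sum_add_distrib]
    refine Finset.sum_congr rfl fun j _ => ?_
    ring
  refine ⟨?_, ?_, ?_⟩
  · rw [show xi F m q 0 = ∑ j : Fin m, X (yvar m j) * X (xvar m j) from if_pos rfl,
      show xi F m q 1 = ∑ j : Fin m, (X (yvar m j) ^ q ^ 1 * X (xvar m j)
        + X (yvar m j) * X (xvar m j) ^ q ^ 1) from if_neg one_ne_zero,
      aux_sum_pow (p := p) hqex]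
    simp only [map_sum, map_add, map_mul, st1, mul_pow, pow_one, Finset.sum_mul]
    rw [← Finset.sum_add_distrib, ← Finset.sum_add_distrib]
    refine Finset.sum_congr rfl fun j _ => ?_
    ring
  · have h2 : (∑ j : Fin m, (X (yvar m j) ^ q ^ (0+1) * X (xvar m j) ^ q
        + X (yvar m j) ^ q * X (xvar m j) ^ q ^ (0+1))) = 2 * xi F m q 0 ^ q := by
      rw [show xi F m q 0 = ∑ j : Fin m, X (yvar m j) * X (xvar m j) from if_pos rfl,
        aux_sum_pow (p := p) hqex, Finset.mul_sum]
      refine Finset.sum_congr rfl fun j _ => ?_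
      rw [mul_pow, pow_one]
      ring
    have := key 0
    rw [h2, pow_one] at this
    exact this
  · intro i hi
    obtain ⟨j, rfl⟩ : ∃ j, i = j + 2 := ⟨i - 2, by omega⟩
    have h2 : (∑ k : Fin m, (X (yvar m k) ^ q ^ (j+1+1) * X (xvar m k) ^ q
        + X (yvar m k) ^ q * X (xvar m k) ^ q ^ (j+1+1))) = xi F m q (j+1) ^ q := by
      rw [show xi F m q (j+1) = ∑ k : Fin m, (X (yvar m k) ^ q ^ (j+1) * X (xvar m k)
        + X (yvar m k) * X (xvar m k) ^ q ^ (j+1)) from if_neg (by omega),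
        aux_sum_pow (p := p) hqex]
      exact Finset.sum_congr rfl fun k _ => (hqterm k (j+1)).symm
    have := key (j+1)
    rw [h2] at this
    exact this
end
end

section
/- Let 1 ≤ i ≤ m. Then u_m divides 𝒫^{e(i,m)}(u_m) in S, and every d ∈ S with u_m·d = 𝒫^{e(i,m)}(u_m) is G-invariant: d·g = d for all g ∈ G. -/
open MvPolynomial

noncomputable section

open OPlus

/-! The `P`-orbit of the variable `X c` consists of the linear forms `ℓ_v = ∑ v_k X_k` with
`v` isotropic, `v_c = 1` and `v_a = 0` for `a > c`; hence `u_m` is the product of `ℓ_v` over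
all isotropic `v` whose last nonzero coordinate is `1`. An element of `G` permutes the isotropic
lines, so it multiplies `u_m` by a nonzero scalar. On the other hand `𝒫(t)(ℓ) = ℓ + ℓ^q t` is
divisible by `ℓ`, and `𝒫(t)` is multiplicative and commutes with `GL_{2m}(F)`; so `u_m` divides
every `𝒫^e(u_m)`, and `g ∈ G` multiplies `𝒫^e(u_m)` by the same scalar as `u_m`. Cancelling
`u_m` in `u_m d = 𝒫^e(u_m)` shows that `d` is invariant. -/

open Matrix

theorem FiniteField.expand_card_mvPolynomial {K σ : Type*} [Field K] [Fintype K]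
    (f : MvPolynomial σ K) : expand (Fintype.card K) f = f ^ Fintype.card K := by
  obtain ⟨p, hp⟩ := CharP.exists K
  have : Fact p.Prime := ⟨CharP.char_is_prime K p⟩
  obtain ⟨n, -, hcard⟩ := FiniteField.card K p
  have hfrob : iterateFrobenius K p n = RingHom.id K := by
    ext x
    rw [iterateFrobenius_def, ← hcard, FiniteField.pow_card, RingHom.id_apply]
  rw [hcard, ← map_iterateFrobenius_expand p f n, hfrob, MvPolynomial.map_id]

theorem two_ne_zero_of_odd_charP {R : Type*} [Ring R] [Nontrivial R] (p : ℕ) [CharP R p]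
    (hodd : Odd p) : (2 : R) ≠ 0 :=
  Ring.two_ne_zero <| by
    rw [ringChar.eq R p]
    rintro rfl
    exact Nat.not_odd_iff_even.2 even_two hodd

theorem map_finprod_mem_of_finite {α M N G : Type*} [CommMonoid M] [CommMonoid N]
    [FunLike G M N] [MonoidHomClass G M N] (g : G) {f : α → M} {s : Set α} (hs : s.Finite) :
    g (∏ᶠ i ∈ s, f i) = ∏ᶠ i ∈ s, g (f i) :=
  (g : M →* N).map_finprod_mem f hs

namespace Matrix

variable {n R : Type*} [Fintype n]

theorem transpose_mul_mul_apply [CommSemiring R] (M g : Matrix n n R) (k l : n) :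
    (gᵀ * M * g) k l = gᵀ k ⬝ᵥ M *ᵥ gᵀ l := by
  rw [mul_assoc, mul_apply, dotProduct]
  simp only [mulVec, dotProduct, mul_apply, transpose_apply]

theorem eq_of_isSymm_of_dotProduct_mulVec_self [DecidableEq n] [CommRing R] [NoZeroDivisors R]
    (h2 : (2 : R) ≠ 0) {M N : Matrix n n R} (hM : M.IsSymm) (hN : N.IsSymm)
    (h : ∀ x, x ⬝ᵥ M *ᵥ x = x ⬝ᵥ N *ᵥ x) : M = N := by
  ext a b
  have hab := h (Pi.single a 1 + Pi.single b 1)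
  have haa := h (Pi.single a 1)
  have hbb := h (Pi.single b 1)
  have hMab : M b a = M a b := by simpa using congr_fun₂ hM a b
  have hNab : N b a = N a b := by simpa using congr_fun₂ hN a b
  simp only [mulVec_add, add_dotProduct, dotProduct_add, mulVec_single_one, single_dotProduct,
    one_mul, col_apply, hMab, hNab] at hab haa hbb
  refine mul_left_cancel₀ h2 ?_
  linear_combination hab - haa - hbb

theorem mulVec_ne_zero_of_mul_eq_one [DecidableEq n] [Semiring R] {g h : Matrix n n R}
    (hgh : h * g = 1) {v : n → R} (hv : v ≠ 0) : g *ᵥ v ≠ 0 := fun h0 =>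
  hv (by rw [← one_mulVec v, ← hgh, ← mulVec_mulVec, h0, mulVec_zero])

end Matrix

namespace OPlus

variable {F : Type} [Field F] {m q : ℕ}

section LeadCoeff

variable {ι K : Type*} [Fintype ι] [LinearOrder ι] [Field K]

open Classical in
/-- The last nonzero coordinate of `v`; it is `0` for `v = 0`. -/
def leadCoeff (v : ι → K) : K :=
  if h : (Finset.univ.filter fun a => v a ≠ 0).Nonempty then
    v ((Finset.univ.filter fun a => v a ≠ 0).max' h)
  else 0

theorem leadCoeff_eq_of {v : ι → K} {c : ι} (hc : v c ≠ 0) (h : ∀ a, c < a → v a = 0) :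
    leadCoeff v = v c := by
  classical
  have hmem : c ∈ Finset.univ.filter fun a => v a ≠ 0 := by simpa using hc
  rw [leadCoeff, dif_pos ⟨c, hmem⟩]
  congr
  refine le_antisymm (Finset.max'_le _ _ _ fun a ha => ?_) (Finset.le_max' _ c hmem)
  exact not_lt.1 fun hca => (Finset.mem_filter.1 ha).2 (h a hca)

theorem exists_leadCoeff_eq {v : ι → K} (hv : v ≠ 0) :
    ∃ c, v c ≠ 0 ∧ (∀ a, c < a → v a = 0) ∧ leadCoeff v = v c := by
  classical
  obtain ⟨b, hb⟩ := Function.ne_iff.1 hv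
  have hne : (Finset.univ.filter fun a => v a ≠ 0).Nonempty := ⟨b, by simpa using hb⟩
  set c := (Finset.univ.filter fun a => v a ≠ 0).max' hne
  have hc : v c ≠ 0 := (Finset.mem_filter.1 (Finset.max'_mem _ hne)).2
  have hmax : ∀ a, c < a → v a = 0 := fun a hca => not_not.1 fun ha =>
    not_le.2 hca (Finset.le_max' _ a (by simpa using ha))
  exact ⟨c, hc, hmax, leadCoeff_eq_of hc hmax⟩

theorem leadCoeff_ne_zero {v : ι → K} (hv : v ≠ 0) : leadCoeff v ≠ 0 := by
  obtain ⟨c, hc, -, hlead⟩ := exists_leadCoeff_eq hv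
  rwa [hlead]

theorem leadCoeff_zero : leadCoeff (0 : ι → K) = 0 := by
  simp [leadCoeff]

theorem ne_zero_of_leadCoeff_eq_one {v : ι → K} (hv : leadCoeff v = 1) : v ≠ 0 := by
  rintro rfl
  simp [leadCoeff_zero] at hv

theorem leadCoeff_smul (t : K) (v : ι → K) : leadCoeff (t • v) = t * leadCoeff v := by
  rcases eq_or_ne t 0 with rfl | ht
  · rw [zero_smul, zero_mul, leadCoeff_zero]
  rcases eq_or_ne v 0 with rfl | hv
  · rw [smul_zero, leadCoeff_zero, mul_zero]
  obtain ⟨c, hc, hmax, hlead⟩ := exists_leadCoeff_eq hv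
  rw [hlead, leadCoeff_eq_of (c := c) (by simp [ht, hc]) fun a hca => by simp [hmax a hca]]
  rfl

def toMonic (v : ι → K) : ι → K := (leadCoeff v)⁻¹ • v

theorem leadCoeff_smul_toMonic {v : ι → K} (hv : v ≠ 0) : leadCoeff v • toMonic v = v :=
  smul_inv_smul₀ (leadCoeff_ne_zero hv) v

theorem leadCoeff_toMonic {v : ι → K} (hv : v ≠ 0) : leadCoeff (toMonic v) = 1 := by
  rw [toMonic, leadCoeff_smul, inv_mul_cancel₀ (leadCoeff_ne_zero hv)]

theorem toMonic_smul {t : K} (ht : t ≠ 0) (v : ι → K) : toMonic (t • v) = toMonic v := by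
  rw [toMonic, toMonic, leadCoeff_smul, smul_smul, mul_inv, mul_comm t⁻¹, mul_assoc,
    inv_mul_cancel₀ ht, mul_one]

theorem toMonic_eq_self {v : ι → K} (hv : leadCoeff v = 1) : toMonic v = v := by
  rw [toMonic, hv, inv_one, one_smul]

end LeadCoeff

def linearForm (v : Fin (2*m) → F) : MvPolynomial (Fin (2*m)) F :=
  ∑ k, C (v k) * X k

theorem coeff_single_linearForm (v : Fin (2*m) → F) (k : Fin (2*m)) :
    coeff (Finsupp.single k 1) (linearForm v) = v k := by
  simp [linearForm, coeff_sum, coeff_C_mul, coeff_X, Finsupp.single_left_inj]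

theorem linearForm_injective : Function.Injective (linearForm (F := F) (m := m)) :=
  fun v w h => funext fun k => by
    rw [← coeff_single_linearForm v, h, coeff_single_linearForm]

theorem linearForm_zero : linearForm (0 : Fin (2*m) → F) = 0 := by
  simp [linearForm]

theorem linearForm_smul (t : F) (v : Fin (2*m) → F) :
    linearForm (t • v) = C t * linearForm v := by
  simp [linearForm, Finset.mul_sum, mul_assoc]

theorem act_C (g : Matrix (Fin (2*m)) (Fin (2*m)) F) (a : F) : act F m g (C a) = C a :=
  (act F m g).commutes a

theorem act_X (g : Matrix (Fin (2*m)) (Fin (2*m)) F) (i : Fin (2*m)) :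
    act F m g (X i) = linearForm (gᵀ i) := by
  simp [act, linearForm]

theorem act_linearForm (g : Matrix (Fin (2*m)) (Fin (2*m)) F) (v : Fin (2*m) → F) :
    act F m g (linearForm v) = linearForm (g *ᵥ v) := by
  simp only [linearForm, map_sum, map_mul, act_C, act_X, mulVec, dotProduct, Finset.mul_sum,
    map_sum C, Finset.sum_mul, transpose_apply]
  rw [Finset.sum_comm]
  simp only [mul_comm, mul_left_comm]

theorem act_mul (g h : Matrix (Fin (2*m)) (Fin (2*m)) F) (f : MvPolynomial (Fin (2*m)) F) :
    act F m g (act F m h f) = act F m (g * h) f := by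
  change ((act F m g).comp (act F m h)) f = _
  congr 1
  refine algHom_ext fun i => ?_
  rw [AlgHom.comp_apply, act_X, act_linearForm, act_X]
  rfl

theorem act_one (f : MvPolynomial (Fin (2*m)) F) : act F m 1 f = f := by
  change act F m 1 f = AlgHom.id F _ f
  congr 1
  refine algHom_ext fun i => ?_
  simp [act, Matrix.one_apply]

theorem steenrod_C (a : F) : steenrod F m q (C a) = Polynomial.C (C a) :=
  (steenrod F m q).commutes a

theorem steenrod_linearForm [Fintype F] (hq : q = Fintype.card F) (v : Fin (2*m) → F) :
    steenrod F m q (linearForm v)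
      = Polynomial.C (linearForm v) + Polynomial.C (linearForm v ^ q) * Polynomial.X := by
  rw [hq, ← FiniteField.expand_card_mvPolynomial]
  simp [linearForm, steenrod, Polynomial.C_mul, mul_add, Finset.sum_add_distrib, Finset.sum_mul,
    mul_assoc]

theorem steenrod_act [Fintype F] (hq : q = Fintype.card F) (g : Matrix (Fin (2*m)) (Fin (2*m)) F)
    (f : MvPolynomial (Fin (2*m)) F) :
    steenrod F m q (act F m g f) = Polynomial.map (act F m g) (steenrod F m q f) := by
  have key : (steenrod F m q).comp (act F m g)
      = (Polynomial.mapAlgHom (act F m g)).comp (steenrod F m q) :=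
    algHom_ext fun i => by
      rw [AlgHom.comp_apply, AlgHom.comp_apply, act_X, steenrod_linearForm hq]
      simp [steenrod, act_X]
  exact DFunLike.congr_fun key f

theorem act_sP [Fintype F] (hq : q = Fintype.card F) (g : Matrix (Fin (2*m)) (Fin (2*m)) F)
    (e : ℕ) (f : MvPolynomial (Fin (2*m)) F) :
    act F m g (sP F m q e f) = sP F m q e (act F m g f) := by
  rw [sP, sP, steenrod_act hq, Polynomial.coeff_map]
  rfl

theorem sP_C_mul (e : ℕ) (s : F) (f : MvPolynomial (Fin (2*m)) F) :
    sP F m q e (C s * f) = C s * sP F m q e f := by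
  rw [sP, sP, map_mul, steenrod_C, Polynomial.coeff_C_mul]

variable (F m q) in
def dvdSteenrodSubmonoid : Submonoid (MvPolynomial (Fin (2*m)) F) where
  carrier := {f | Polynomial.C f ∣ steenrod F m q f}
  one_mem' := by simp
  mul_mem' {f h} hf hh := by simpa [map_mul] using mul_dvd_mul hf hh

theorem linearForm_mem_dvdSteenrodSubmonoid [Fintype F] (hq : q = Fintype.card F)
    (v : Fin (2*m) → F) : linearForm v ∈ dvdSteenrodSubmonoid F m q := by
  show Polynomial.C (linearForm v) ∣ steenrod F m q (linearForm v)
  rw [steenrod_linearForm hq, map_pow]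
  exact dvd_add dvd_rfl (Dvd.dvd.mul_right (dvd_pow_self _ (hq ▸ Fintype.card_ne_zero)) _)

theorem uPoly_dvd_sP [Fintype F] (hq : q = Fintype.card F) (e : ℕ) :
    uPoly F m q ∣ sP F m q e (uPoly F m q) := by
  have hNorb (c : Fin (2*m)) : Norb F m q (X c) ∈ dvdSteenrodSubmonoid F m q := by
    refine finprod_mem_induction (· ∈ dvdSteenrodSubmonoid F m q) (Submonoid.one_mem _)
      (fun _ _ => Submonoid.mul_mem _) ?_
    rintro _ ⟨g, -, rfl⟩
    rw [act_X]
    exact linearForm_mem_dvdSteenrodSubmonoid hq _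
  have hu : uPoly F m q ∈ dvdSteenrodSubmonoid F m q :=
    Submonoid.prod_mem _ fun j _ => Submonoid.mul_mem _ (hNorb _) (hNorb _)
  exact (Polynomial.C_dvd_iff_dvd_coeff _ _).1 hu e

theorem rev_yvar (j : Fin m) : (yvar m j).rev = xvar m j := by
  ext
  simp only [yvar, xvar, Fin.val_rev]
  omega

theorem rev_xvar (j : Fin m) : (xvar m j).rev = yvar m j := by
  rw [← rev_yvar, Fin.rev_rev]

@[to_additive]
theorem prod_yvar_mul_xvar {M : Type*} [CommMonoid M] (f : Fin (2*m) → M) :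
    ∏ j, f (yvar m j) * f (xvar m j) = ∏ k, f k := by
  have hinj : Function.Injective (Sum.elim (yvar m) (xvar m)) := by
    rintro (j | j) (j' | j') h <;> simp [yvar, xvar, Fin.ext_iff] at h ⊢ <;> omega
  have hbij : Function.Bijective (Sum.elim (yvar m) (xvar m)) :=
    (Fintype.bijective_iff_injective_and_card _).2 ⟨hinj, by simp [two_mul]⟩
  rw [← Fintype.prod_bijective _ hbij (f ∘ Sum.elim (yvar m) (xvar m)) f fun _ => rfl,
    Fintype.prod_sum_type, Finset.prod_mul_distrib]
  rfl

variable (F m) in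
/-- `Fin.rev` exchanges `y_j` and `x_j`, so this antidiagonal matrix is the Gram matrix of `2 ξ₀`
(`quadForm_gram`). -/
def gram : Matrix (Fin (2*m)) (Fin (2*m)) F := (Fin.revPerm : Equiv.Perm (Fin (2*m))).permMatrix F

theorem gram_mulVec (v : Fin (2*m) → F) : gram F m *ᵥ v = v ∘ Fin.rev := by
  rw [gram, permMatrix_mulVec]
  rfl

theorem gram_apply (k l : Fin (2*m)) : gram F m k l = if l = k.rev then 1 else 0 := by
  simp [gram, PEquiv.toMatrix_apply, eq_comm]

theorem gram_isSymm : (gram F m).IsSymm := by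
  rw [IsSymm, gram, transpose_permMatrix, Equiv.Perm.inv_def, Fin.revPerm_symm]

theorem gram_mul_gram : gram F m * gram F m = 1 := by
  have hrev : (Fin.revPerm * Fin.revPerm : Equiv.Perm (Fin (2*m))) = 1 :=
    Equiv.ext fun i => Fin.rev_rev i
  rw [gram, ← permMatrix_mul, hrev, permMatrix_one]

theorem single_dotProduct_gram_mulVec (a : Fin (2*m)) (t : F) (w : Fin (2*m) → F) :
    Pi.single a t ⬝ᵥ gram F m *ᵥ w = t * w a.rev := by
  rw [single_dotProduct, gram_mulVec, Function.comp_apply]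

theorem dotProduct_gram_mulVec_comm (u w : Fin (2*m) → F) :
    u ⬝ᵥ gram F m *ᵥ w = w ⬝ᵥ gram F m *ᵥ u := by
  rw [dotProduct_mulVec, ← mulVec_transpose, gram_isSymm.eq, dotProduct_comm]

theorem dotProduct_gram_mulVec_single (u : Fin (2*m) → F) (b : Fin (2*m)) (t : F) :
    u ⬝ᵥ gram F m *ᵥ Pi.single b t = u b.rev * t := by
  rw [dotProduct_gram_mulVec_comm, single_dotProduct_gram_mulVec, mul_comm]

theorem dotProduct_gram_mulVec_mulVec {g : Matrix (Fin (2*m)) (Fin (2*m)) F}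
    (hg : gᵀ * gram F m * g = gram F m) (u w : Fin (2*m) → F) :
    g *ᵥ u ⬝ᵥ gram F m *ᵥ (g *ᵥ w) = u ⬝ᵥ gram F m *ᵥ w := by
  conv_rhs => rw [← hg, ← mulVec_mulVec, ← mulVec_mulVec, dotProduct_mulVec, vecMul_transpose]

theorem transpose_mul_gram_mul_eq_iff {g : Matrix (Fin (2*m)) (Fin (2*m)) F} :
    gᵀ * gram F m * g = gram F m ↔ g * gram F m * gᵀ = gram F m := by
  suffices key : ∀ g : Matrix (Fin (2*m)) (Fin (2*m)) F,
      g * gram F m * gᵀ = gram F m → gᵀ * gram F m * g = gram F m from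
    ⟨fun h => by simpa using key gᵀ (by simpa using h), key g⟩
  intro g hg
  have hinv : (gram F m * gᵀ * gram F m) * g = 1 := by
    rw [mul_eq_one_comm, ← mul_assoc, ← mul_assoc, hg, gram_mul_gram]
  calc gᵀ * gram F m * g = gram F m * ((gram F m * gᵀ * gram F m) * g) := by
        simp only [← mul_assoc, gram_mul_gram, one_mul]
    _ = gram F m := by rw [hinv, mul_one]

def quadForm (M : Matrix (Fin (2*m)) (Fin (2*m)) F) : MvPolynomial (Fin (2*m)) F :=
  X ⬝ᵥ M.map C *ᵥ X

theorem eval_quadForm (x : Fin (2*m) → F) (M : Matrix (Fin (2*m)) (Fin (2*m)) F) :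
    eval x (quadForm M) = x ⬝ᵥ M *ᵥ x := by
  have hX : ⇑(eval x) ∘ X = x := funext fun _ => eval_X _
  have hMX : ⇑(eval x) ∘ (M.map C *ᵥ X) = M *ᵥ x := funext fun i => by
    rw [Function.comp_apply, RingHom.map_mulVec, hX]
    congr
    ext k l
    simp
  rw [quadForm, RingHom.map_dotProduct, hX, hMX]

theorem act_quadForm (g M : Matrix (Fin (2*m)) (Fin (2*m)) F) :
    act F m g (quadForm M) = quadForm (g * M * gᵀ) := by
  set φ : MvPolynomial (Fin (2*m)) F →+* MvPolynomial (Fin (2*m)) F := (act F m g).toRingHom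
  have hX : ⇑φ ∘ X = (g.map C)ᵀ *ᵥ X := by
    ext i
    simp [φ, act_X, linearForm, mulVec, dotProduct]
  have hMX : ⇑φ ∘ (M.map C *ᵥ X) = M.map C *ᵥ ((g.map C)ᵀ *ᵥ X) := funext fun i => by
    have hC : (M.map C).map φ = M.map C := by ext; simp [φ]
    rw [Function.comp_apply, RingHom.map_mulVec, hX, hC]
  change φ (quadForm M) = _
  rw [quadForm, quadForm, RingHom.map_dotProduct, hX, hMX, Matrix.map_mul, Matrix.map_mul,
    transpose_map, ← mulVec_mulVec, ← mulVec_mulVec, dotProduct_mulVec X, mulVec_transpose]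

theorem quadForm_gram : quadForm (gram F m) = C 2 * xi F m q 0 := by
  have hgX : (gram F m).map C *ᵥ X = X ∘ Fin.rev := by
    ext k : 1
    simp [gram, mulVec, dotProduct, PEquiv.toMatrix_apply, apply_ite C]
  rw [quadForm, hgX, xi, if_pos rfl, dotProduct,
    ← sum_yvar_add_xvar (fun k => X k * (X ∘ Fin.rev) k)]
  simp only [Function.comp_apply, rev_yvar, rev_xvar, Finset.mul_sum]
  refine Finset.sum_congr rfl fun j _ => ?_
  rw [map_ofNat]
  ring

theorem act_xi_zero_eq_iff (h2 : (2 : F) ≠ 0) (g : Matrix (Fin (2*m)) (Fin (2*m)) F) :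
    act F m g (xi F m q 0) = xi F m q 0 ↔ g * gram F m * gᵀ = gram F m := by
  have hC2 : (C 2 : MvPolynomial (Fin (2*m)) F) ≠ 0 := by rwa [Ne, C_eq_zero]
  have hact : act F m g (C 2 * xi F m q 0) = C 2 * act F m g (xi F m q 0) := by
    rw [map_mul, act_C]
  rw [← mul_right_inj' hC2, ← hact, ← quadForm_gram, act_quadForm]
  refine ⟨fun h => ?_, fun h => by rw [h]⟩
  refine Matrix.eq_of_isSymm_of_dotProduct_mulVec_self h2 ?_ gram_isSymm fun x => ?_
  · rw [IsSymm, transpose_mul, transpose_mul, transpose_transpose, gram_isSymm.eq, mul_assoc]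
  · rw [← eval_quadForm, ← eval_quadForm, h]

theorem mem_Gset_iff (h2 : (2 : F) ≠ 0) {g : Matrix (Fin (2*m)) (Fin (2*m)) F} :
    g ∈ Gset F m q ↔ gᵀ * gram F m * g = gram F m := by
  rw [Gset, Set.mem_ofPred_eq, act_xi_zero_eq_iff h2, ← transpose_mul_gram_mul_eq_iff]
  refine ⟨And.right, fun hg => ⟨(isUnit_iff_isUnit_det g).2 ?_, hg⟩⟩
  refine isUnit_det_of_left_inverse (B := gram F m * gᵀ * gram F m) ?_
  rw [mul_assoc, mul_assoc, ← mul_assoc gᵀ, hg, gram_mul_gram]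

theorem isUnit_det_of_mem_Gset {g : Matrix (Fin (2*m)) (Fin (2*m)) F} (hg : g ∈ Gset F m q) :
    IsUnit g.det :=
  (isUnit_iff_isUnit_det g).1 hg.1

theorem nonsing_inv_mem_Gset {g : Matrix (Fin (2*m)) (Fin (2*m)) F} (hg : g ∈ Gset F m q) :
    g⁻¹ ∈ Gset F m q := by
  refine ⟨isUnit_nonsing_inv_iff.2 hg.1, ?_⟩
  calc act F m g⁻¹ (xi F m q 0) = act F m g⁻¹ (act F m g (xi F m q 0)) := by rw [hg.2]
    _ = xi F m q 0 := by
      rw [act_mul, nonsing_inv_mul _ (isUnit_det_of_mem_Gset hg), act_one]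

theorem rev_ne_self (c : Fin (2*m)) : c.rev ≠ c := by
  rw [Ne, Fin.ext_iff, Fin.val_rev]
  omega

variable (F) in
def monicIsotropicAt (c : Fin (2*m)) : Set (Fin (2*m) → F) :=
  {v | v c = 1 ∧ (∀ a, c < a → v a = 0) ∧ v ⬝ᵥ gram F m *ᵥ v = 0}

variable (F m) in
def monicIsotropic : Set (Fin (2*m) → F) :=
  {v | v ⬝ᵥ gram F m *ᵥ v = 0 ∧ leadCoeff v = 1}

theorem iUnion_monicIsotropicAt : ⋃ c, monicIsotropicAt F c = monicIsotropic F m := by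
  ext v
  simp only [Set.mem_iUnion, monicIsotropicAt, monicIsotropic, Set.mem_ofPred_eq]
  constructor
  · rintro ⟨c, hc, hmax, hiso⟩
    exact ⟨hiso, by rw [leadCoeff_eq_of (hc ▸ one_ne_zero) hmax, hc]⟩
  · rintro ⟨hiso, hlead⟩
    obtain ⟨c, -, hmax, hc⟩ := exists_leadCoeff_eq (ne_zero_of_leadCoeff_eq_one hlead)
    exact ⟨c, hc ▸ hlead, hmax, hiso⟩

theorem pairwise_disjoint_monicIsotropicAt :
    Pairwise (Function.onFun Disjoint (monicIsotropicAt F (m := m))) := by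
  intro c c' hcc'
  refine Set.disjoint_left.2 fun v hv hv' => ?_
  rcases lt_or_gt_of_ne hcc' with h | h
  · exact one_ne_zero (hv'.1.symm.trans (hv.2.1 c' h))
  · exact one_ne_zero (hv.1.symm.trans (hv'.2.1 c h))

/-- For `v ∈ monicIsotropicAt F c`, an element of `P` sending `X c` to `linearForm v`. -/
def unipotentOfColumn (c : Fin (2*m)) (v : Fin (2*m) → F) : Matrix (Fin (2*m)) (Fin (2*m)) F :=
  (of fun k => if k = c then v else if k = c.rev then Pi.single c.rev 1
    else Pi.single k 1 - v k.rev • Pi.single c.rev 1)ᵀ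

theorem transpose_unipotentOfColumn_apply (c k : Fin (2*m)) (v : Fin (2*m) → F) :
    (unipotentOfColumn c v)ᵀ k = if k = c then v else if k = c.rev then Pi.single c.rev 1
      else Pi.single k 1 - v k.rev • Pi.single c.rev 1 :=
  rfl

theorem transpose_mul_gram_mul_unipotentOfColumn {c : Fin (2*m)} {v : Fin (2*m) → F}
    (hv : v ∈ monicIsotropicAt F c) :
    (unipotentOfColumn c v)ᵀ * gram F m * unipotentOfColumn c v = gram F m := by
  obtain ⟨hvc, -, hiso⟩ := hv
  ext k l
  rw [transpose_mul_mul_apply, gram_apply]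
  have := k.isLt; have := l.isLt; have := c.isLt
  simp only [transpose_unipotentOfColumn_apply]
  -- Each pairing of two columns is a combination of Kronecker deltas in the indices, `v c = 1`
  -- and `v ⬝ᵥ gram F m *ᵥ v = 0`; the deltas are decided by linear arithmetic on `2m - 1 - ·`.
  split_ifs <;>
    simp only [sub_dotProduct, smul_dotProduct, mulVec_sub, mulVec_smul, dotProduct_sub,
      dotProduct_smul, single_dotProduct_gram_mulVec, dotProduct_gram_mulVec_single, Fin.rev_rev,
      Pi.single_apply, hvc, hiso, smul_eq_mul] <;>
    (try split_ifs) <;> simp only [Fin.ext_iff, Fin.val_rev] at * <;>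
    first | ring1 | (exfalso; omega)

theorem unipotentOfColumn_mem_Pset (h2 : (2 : F) ≠ 0) {c : Fin (2*m)} {v : Fin (2*m) → F}
    (hv : v ∈ monicIsotropicAt F c) : unipotentOfColumn c v ∈ Pset F m q := by
  refine ⟨(mem_Gset_iff h2).2 ?_, fun i j hji => ?_, fun i => ?_⟩
  · exact transpose_mul_gram_mul_unipotentOfColumn hv
  · change (unipotentOfColumn c v)ᵀ j i = 0
    rw [transpose_unipotentOfColumn_apply]
    split_ifs with hjc hjr
    · exact hv.2.1 i (hjc ▸ hji)
    · rw [hjr] at hji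
      exact Pi.single_eq_of_ne hji.ne' _
    · have hrev : i = c.rev → v j.rev = 0 := fun h => hv.2.1 _ (Fin.lt_rev_iff.1 (h ▸ hji))
      by_cases hi : i = c.rev <;> simp [hji.ne', hi, hrev, Ne.symm hjr]
  · change (unipotentOfColumn c v)ᵀ i i = 1
    rw [transpose_unipotentOfColumn_apply]
    split_ifs with hic hir
    · rw [hic, hv.1]
    · rw [hir, Pi.single_eq_same]
    · simp [hir]

theorem orbit_X_eq_image (h2 : (2 : F) ≠ 0) (c : Fin (2*m)) :
    {w | ∃ g ∈ Pset F m q, act F m g (X c) = w} = linearForm '' monicIsotropicAt F c := by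
  ext w
  constructor
  · rintro ⟨g, ⟨hgG, htri, hdiag⟩, rfl⟩
    refine ⟨gᵀ c, ⟨hdiag c, fun a ha => htri a c ha, ?_⟩, (act_X g c).symm⟩
    have hcc := congr_fun₂ ((mem_Gset_iff h2).1 hgG) c c
    rwa [transpose_mul_mul_apply, gram_apply, if_neg (rev_ne_self c).symm] at hcc
  · rintro ⟨v, hv, rfl⟩
    exact ⟨unipotentOfColumn c v, unipotentOfColumn_mem_Pset h2 hv, by
      rw [act_X, transpose_unipotentOfColumn_apply, if_pos rfl]⟩

theorem Norb_X_eq_finprod (h2 : (2 : F) ≠ 0) (c : Fin (2*m)) :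
    Norb F m q (X c) = ∏ᶠ v ∈ monicIsotropicAt F c, linearForm v := by
  rw [Norb, orbit_X_eq_image h2, finprod_mem_image linearForm_injective.injOn]

theorem uPoly_eq_finprod [Finite F] (h2 : (2 : F) ≠ 0) :
    uPoly F m q = ∏ᶠ v ∈ monicIsotropic F m, linearForm v := by
  rw [uPoly, prod_yvar_mul_xvar (fun c => Norb F m q (X c)), ← iUnion_monicIsotropicAt,
    finprod_mem_iUnion pairwise_disjoint_monicIsotropicAt fun _ => Set.toFinite _,
    finprod_eq_prod_of_fintype]
  simp only [Norb_X_eq_finprod h2]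

theorem uPoly_ne_zero [Finite F] (h2 : (2 : F) ≠ 0) : uPoly F m q ≠ 0 := by
  rw [uPoly_eq_finprod h2]
  refine finprod_mem_induction (· ≠ 0) one_ne_zero (fun _ _ => mul_ne_zero) fun v hv => ?_
  rw [Ne, ← linearForm_zero, linearForm_injective.eq_iff]
  exact ne_zero_of_leadCoeff_eq_one hv.2

theorem toMonic_mulVec_toMonic_mulVec {g h : Matrix (Fin (2*m)) (Fin (2*m)) F} (hgh : h * g = 1)
    {v : Fin (2*m) → F} (hv : leadCoeff v = 1) : toMonic (h *ᵥ toMonic (g *ᵥ v)) = v := by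
  have hL := leadCoeff_ne_zero (mulVec_ne_zero_of_mul_eq_one hgh (ne_zero_of_leadCoeff_eq_one hv))
  change toMonic (h *ᵥ ((leadCoeff (g *ᵥ v))⁻¹ • (g *ᵥ v))) = v
  rw [mulVec_smul, mulVec_mulVec, hgh, one_mulVec, toMonic_smul (inv_ne_zero hL),
    toMonic_eq_self hv]

theorem mulVec_ne_zero_of_mem_Gset {g : Matrix (Fin (2*m)) (Fin (2*m)) F} (hg : g ∈ Gset F m q)
    {v : Fin (2*m) → F} (hv : v ≠ 0) : g *ᵥ v ≠ 0 :=
  mulVec_ne_zero_of_mul_eq_one (nonsing_inv_mul g (isUnit_det_of_mem_Gset hg)) hv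

theorem toMonic_mulVec_mem_monicIsotropic (h2 : (2 : F) ≠ 0)
    {g : Matrix (Fin (2*m)) (Fin (2*m)) F} (hg : g ∈ Gset F m q) {v : Fin (2*m) → F}
    (hv : v ∈ monicIsotropic F m) : toMonic (g *ᵥ v) ∈ monicIsotropic F m := by
  refine ⟨?_, leadCoeff_toMonic (mulVec_ne_zero_of_mem_Gset hg (ne_zero_of_leadCoeff_eq_one hv.2))⟩
  rw [toMonic, smul_dotProduct, mulVec_smul, dotProduct_smul,
    dotProduct_gram_mulVec_mulVec ((mem_Gset_iff h2).1 hg), hv.1, smul_zero, smul_zero]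

theorem act_linearForm_eq_C_mul_toMonic {g : Matrix (Fin (2*m)) (Fin (2*m)) F}
    {v : Fin (2*m) → F} (hgv : g *ᵥ v ≠ 0) :
    act F m g (linearForm v) = C (leadCoeff (g *ᵥ v)) * linearForm (toMonic (g *ᵥ v)) := by
  rw [act_linearForm, ← linearForm_smul, leadCoeff_smul_toMonic hgv]

theorem exists_act_uPoly_eq_C_mul [Finite F] (h2 : (2 : F) ≠ 0)
    {g : Matrix (Fin (2*m)) (Fin (2*m)) F} (hg : g ∈ Gset F m q) :
    ∃ s : F, s ≠ 0 ∧ act F m g (uPoly F m q) = C s * uPoly F m q := by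
  have hdet := isUnit_det_of_mem_Gset hg
  have hgv (v) (hv : v ∈ monicIsotropic F m) : g *ᵥ v ≠ 0 :=
    mulVec_ne_zero_of_mem_Gset hg (ne_zero_of_leadCoeff_eq_one hv.2)
  have hfin : (monicIsotropic F m).Finite := Set.toFinite _
  have hbij : Set.BijOn (fun v => toMonic (g *ᵥ v)) (monicIsotropic F m) (monicIsotropic F m) :=
    Set.InvOn.bijOn (f' := fun v => toMonic (g⁻¹ *ᵥ v))
      ⟨fun v hv => toMonic_mulVec_toMonic_mulVec (nonsing_inv_mul g hdet) hv.2,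
        fun v hv => toMonic_mulVec_toMonic_mulVec (mul_nonsing_inv g hdet) hv.2⟩
      (fun v hv => toMonic_mulVec_mem_monicIsotropic h2 hg hv)
      (fun v hv => toMonic_mulVec_mem_monicIsotropic h2 (nonsing_inv_mem_Gset hg) hv)
  refine ⟨∏ᶠ v ∈ monicIsotropic F m, leadCoeff (g *ᵥ v), ?_, ?_⟩
  · exact finprod_mem_induction (· ≠ 0) one_ne_zero (fun _ _ => mul_ne_zero)
      fun v hv => leadCoeff_ne_zero (hgv v hv)
  · rw [uPoly_eq_finprod h2, map_finprod_mem_of_finite (act F m g) hfin,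
      finprod_mem_congr rfl fun v hv => act_linearForm_eq_C_mul_toMonic (hgv v hv),
      finprod_mem_mul_distrib hfin, map_finprod_mem_of_finite C hfin,
      finprod_mem_eq_of_bijOn _ hbij fun _ _ => rfl]

end OPlus

variable (F : Type) [Field F] [Fintype F]

theorem statement_5
    (p : ℕ) (hodd : Odd p)
    [CharP F p]
    (q : ℕ) (hq : q = Fintype.card F)
    (m : ℕ)
    (i : ℕ) :
    uPoly F m q ∣ sP F m q (eExp m q i) (uPoly F m q) ∧
    ∀ d : MvPolynomial (Fin (2*m)) F,
      uPoly F m q * d = sP F m q (eExp m q i) (uPoly F m q) →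
      ∀ g ∈ Gset F m q, act F m g d = d := by
  have h2 : (2 : F) ≠ 0 := two_ne_zero_of_odd_charP p hodd
  refine ⟨uPoly_dvd_sP hq _, fun d hd g hg => ?_⟩
  obtain ⟨s, hs, hgu⟩ := exists_act_uPoly_eq_C_mul h2 hg
  have hsu : C s * uPoly F m q ≠ 0 := mul_ne_zero (C_ne_zero.2 hs) (uPoly_ne_zero h2)
  refine mul_left_cancel₀ hsu ?_
  calc C s * uPoly F m q * act F m g d = act F m g (uPoly F m q * d) := by rw [map_mul, hgu]
    _ = C s * sP F m q (eExp m q i) (uPoly F m q) := by rw [hd, act_sP hq, hgu, sP_C_mul]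
    _ = C s * uPoly F m q * d := by rw [← hd, mul_assoc]
end
end

section
/- For every f ∈ S: ψ_1(f) = 0 if and only if x_1 divides f in S; moreover ψ_1(ψ_1(f)) = (ψ_1(f))^q. -/
open MvPolynomial

noncomputable section

open OPlus

variable (F : Type) [Field F] [Fintype F]

/-- `ψ_1(f) = 0` iff `x_1 ∣ f`, and `ψ_1(ψ_1(f)) = ψ_1(f)^q`. -/
theorem statement_11
    (p : ℕ) (hp : p.Prime) (hodd : Odd p)
    [CharP F p]
    (q : ℕ) (hq : q = Fintype.card F)
    (m : ℕ) (hm : 1 ≤ m)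
    (psi1 : MvPolynomial (Fin (2*m)) F →ₐ[F] MvPolynomial (Fin (2*m)) F)
    (hpsi1 : psi1 = aeval
      (fun i => X i ^ q - X i * X (xvar m ⟨0, hm⟩) ^ (q - 1)))
    (f : MvPolynomial (Fin (2*m)) F) :
    (psi1 f = 0 ↔ X (xvar m ⟨0, hm⟩) ∣ f) ∧
    psi1 (psi1 f) = (psi1 f) ^ q := by
  classical
  haveI := Fact.mk hp
  set x1 : Fin (2*m) := xvar m ⟨0, hm⟩ with hx1def
  have hq2 : 2 ≤ q := hq ▸ Fintype.one_lt_card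
  obtain ⟨k, -, hqk⟩ := FiniteField.card F p
  have hqpk : q = p ^ (k : ℕ) := by rw [hq, hqk]
  have haq : ∀ a : F, a ^ q = a := fun a => by rw [hq]; exact FiniteField.pow_card a
  have hq1 : q - 1 + 1 = q := by omega
  have hq10 : q - 1 ≠ 0 := by omega
  have hXi : ∀ i, psi1 (X i) = X i ^ q - X i * X x1 ^ (q-1) := by
    intro i; rw [hpsi1, aeval_X]
  have hx0 : psi1 (X x1) = 0 := by
    rw [hXi, ← pow_succ', hq1, sub_self]
  have hCa : ∀ a : F, psi1 (C a) = C a := by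
    intro a
    have := psi1.commutes a
    rwa [MvPolynomial.algebraMap_eq] at this
  -- the substitution x1 ↦ 0
  set σ0 : MvPolynomial (Fin (2*m)) F →ₐ[F] MvPolynomial (Fin (2*m)) F :=
    aeval (fun i => if i = x1 then 0 else X i) with hσ0
  have hσX : ∀ i, σ0 (X i) = if i = x1 then 0 else X i := fun i => aeval_X _ i
  have hσC : ∀ a : F, σ0 (C a) = C a := by
    intro a
    have := σ0.commutes a
    rwa [MvPolynomial.algebraMap_eq] at this
  -- X x1 divides f - σ0 f
  have hdvd : ∀ g : MvPolynomial (Fin (2*m)) F, X x1 ∣ g - σ0 g := by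
    intro g
    induction g using MvPolynomial.induction_on with
    | C a => rw [hσC, sub_self]; exact dvd_zero _
    | add f g hf hg =>
      rw [map_add]
      have := dvd_add hf hg
      rwa [sub_add_sub_comm] at this
    | mul_X f i hf =>
      rw [map_mul, hσX]
      by_cases h : i = x1
      · subst h
        rw [if_pos rfl, mul_zero, sub_zero]
        exact Dvd.intro_left f rfl
      · rw [if_neg h]
        have := hf.mul_right (X i)
        rwa [sub_mul] at this
  -- σ0 ∘ psi1 = (·^q) ∘ σ0
  have key1 : ∀ g : MvPolynomial (Fin (2*m)) F, σ0 (psi1 g) = (σ0 g) ^ q := by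
    intro g
    induction g using MvPolynomial.induction_on with
    | C a => rw [hCa, hσC, ← C_pow, haq]
    | add f g hf hg =>
      rw [map_add, map_add, map_add, hf, hg, hqpk, add_pow_char_pow]
    | mul_X f i hf =>
      rw [map_mul, map_mul, map_mul, hf, hXi, map_sub, map_mul, map_pow, map_pow,
        hσX x1, if_pos rfl, zero_pow hq10, mul_zero, sub_zero, mul_pow]
  -- psi1 ∘ psi1 = (·^q) ∘ psi1
  have key2 : ∀ g : MvPolynomial (Fin (2*m)) F, psi1 (psi1 g) = (psi1 g) ^ q := by
    intro g
    induction g using MvPolynomial.induction_on with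
    | C a => rw [hCa, hCa, ← C_pow, haq]
    | add f g hf hg =>
      rw [map_add, map_add, hf, hg, hqpk, add_pow_char_pow]
    | mul_X f i hf =>
      rw [map_mul, map_mul, hf, hXi, map_sub, map_mul, map_pow, map_pow,
        hx0, zero_pow hq10, mul_zero, sub_zero, mul_pow, hXi]
  refine ⟨⟨fun h0 => ?_, fun ⟨g, hg⟩ => by rw [hg, map_mul, hx0, zero_mul]⟩, key2 f⟩
  have : (σ0 f) ^ q = 0 := by rw [← key1, h0, map_zero]
  have hσf : σ0 f = 0 := pow_eq_zero_iff (by omega) |>.mp this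
  have := hdvd f
  rwa [hσf, sub_zero] at this
end
end

section
/- Let p be an odd prime, q a positive power of p, and j a natural number with 2j ≤ q−1. Let r be an integer such that j!·((q−1)−2j)!·r = (q−2−j)!. Then in ℤ/pℤ one has (−1)^j·(q−1)·r = C_j, where C_j is the j-th Catalan number. -/
/-! Write `n = q - 1`. For `j ≥ 1` the hypothesis says `r = (n-1-j)! / (j! (n-2j)!)`, so
`n r = C(n-j, j) + C(n-1-j, j-1)`, while for `j = 0` it forces `n r = 1`.
Modulo `p`, Chu–Vandermonde for the integer binomial coefficient `Ring.choose` and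
`p ∣ C(q, i)` for `0 < i < q` give `C(q + m, k) ≡ C(m, k)` for every integer `m` and `k < q`;
with `m = -(c+1)` this turns `C(q-1-c, k)` into `(-1)^k C(c+k, k)`.
Hence `(-1)^j n r ≡ C(2j, j) - C(2j, j-1) = C_j`. -/

open Finset
open scoped Nat

theorem ZMod.intCast_choose_prime_pow_add {p : ℕ} (hp : p.Prime) {e k : ℕ} (hk : k < p ^ e)
    (m : ℤ) : ((Ring.choose ((p ^ e : ℕ) + m) k : ℤ) : ZMod p) = (Ring.choose m k : ℤ) := by
  rw [Ring.add_choose_eq k (.all _ _), Int.cast_sum,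
    sum_eq_single_of_mem (0, k) (HasAntidiagonal.mem_antidiagonal.mpr (zero_add k))]
  · simp
  rintro ⟨i, l⟩ hil hne
  have hi : i ≠ 0 := by rintro rfl; simp_all
  have hik : i < p ^ e := by rw [HasAntidiagonal.mem_antidiagonal] at hil; omega
  rw [Ring.choose_natCast, Int.cast_mul, Int.cast_natCast,
    (ZMod.natCast_eq_zero_iff _ _).mpr (hp.dvd_choose_pow hi hik.ne), zero_mul]

theorem ZMod.natCast_choose_eq_neg_one_pow_mul {p : ℕ} (hp : p.Prime) {e n c k : ℕ}
    (hn : n + c + 1 = p ^ e) (hk : k < p ^ e) :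
    (n.choose k : ZMod p) = (-1) ^ k * ((c + k).choose k : ℕ) := by
  have hcast : (n : ℤ) = (p ^ e : ℕ) + -((c + 1 : ℕ) : ℤ) := by rw [← hn]; push_cast; ring
  have := ZMod.intCast_choose_prime_pow_add hp hk (-((c + 1 : ℕ) : ℤ))
  rw [← hcast, Ring.choose_neg,
    show ((c + 1 : ℕ) : ℤ) + k - 1 = ((c + k : ℕ) : ℤ) by push_cast; ring,
    Ring.choose_natCast, Ring.choose_natCast, Units.smul_def, Int.coe_negOnePow_natCast,
    smul_eq_mul, Int.cast_natCast] at this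
  exact_mod_cast this

theorem catalan_succ_eq_choose_sub_choose (n : ℕ) :
    (catalan (n + 1) : ℤ) = (2 * n + 2).choose (n + 1) - (2 * n + 2).choose n := by
  have hcat := succ_mul_catalan_eq_centralBinom (n + 1)
  have hsucc := Nat.choose_succ_right_eq (2 * n + 2) n
  rw [Nat.centralBinom_eq_two_mul_choose, show 2 * (n + 1) = 2 * n + 2 by ring] at hcat
  rw [show 2 * n + 2 - n = n + 2 by omega] at hsucc
  have hpos : ((n : ℤ) + 2) ≠ 0 := by positivity
  apply mul_left_cancel₀ hpos
  zify at hcat hsucc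
  linear_combination hcat - hsucc

theorem Nat.factorial_mul_factorial_mul_choose_add_choose (m i : ℕ) :
    (i + 1)! * m ! * ((m + i + 1).choose (i + 1) + (m + i).choose i) =
      (m + 2 * i + 2) * (m + i)! := by
  have h1 := Nat.add_choose_mul_factorial_mul_factorial m (i + 1)
  have h2 := Nat.add_choose_mul_factorial_mul_factorial m i
  rw [← add_assoc, Nat.factorial_succ i, Nat.factorial_succ (m + i)] at h1
  rw [Nat.factorial_succ]
  nlinarith

theorem Int.mul_eq_choose_add_choose_of_factorial_mul_eq {m i : ℕ} {r : ℤ}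
    (hr : ((i + 1)! : ℤ) * m ! * r = (m + i)!) :
    ((m + 2 * i + 2 : ℕ) : ℤ) * r = (m + i + 1).choose (i + 1) + (m + i).choose i := by
  apply mul_left_cancel₀ (show ((i + 1)! : ℤ) * m ! ≠ 0 by positivity)
  have key := congrArg (Nat.cast : ℕ → ℤ)
    (Nat.factorial_mul_factorial_mul_choose_add_choose m i)
  push_cast at key ⊢
  linear_combination (m + 2 * (i : ℤ) + 2) * hr - key

theorem Int.succ_mul_eq_one_of_factorial_mul_eq {m : ℕ} {r : ℤ}
    (hr : ((m + 1)! : ℤ) * r = m !) :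
    ((m + 1 : ℕ) : ℤ) * r = 1 := by
  apply mul_left_cancel₀ (show (m ! : ℤ) ≠ 0 by positivity)
  rw [Nat.factorial_succ] at hr
  push_cast at hr ⊢
  linear_combination hr

theorem ZMod.neg_one_pow_mul_choose_add_choose_eq_catalan {p : ℕ} (hp : p.Prime) {e m i : ℕ}
    (hq : m + 2 * i + 3 = p ^ e) :
    (-1 : ZMod p) ^ (i + 1) * ((m + i + 1).choose (i + 1) + (m + i).choose i : ℕ) =
      catalan (i + 1) := by
  have hA := ZMod.natCast_choose_eq_neg_one_pow_mul hp (k := i + 1)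
    (show m + i + 1 + (i + 1) + 1 = p ^ e by omega) (by omega)
  have hB := ZMod.natCast_choose_eq_neg_one_pow_mul hp (k := i)
    (show m + i + (i + 2) + 1 = p ^ e by omega) (by omega)
  rw [show i + 1 + (i + 1) = 2 * i + 2 by ring] at hA
  rw [show i + 2 + i = 2 * i + 2 by ring] at hB
  push_cast
  rw [hA, hB, ← Int.cast_natCast (catalan _), catalan_succ_eq_choose_sub_choose]
  have hsign : ((-1 : ZMod p) ^ i) ^ 2 = 1 := by rw [← pow_mul, pow_mul', neg_one_sq, one_pow]
  push_cast
  linear_combination (((2 * i + 2).choose (i + 1) : ZMod p) - (2 * i + 2).choose i) * hsign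

theorem statement_19_general
    (p : ℕ) (hp : p.Prime)
    (e : ℕ) (he : 1 ≤ e) (q : ℕ) (hq : q = p ^ e)
    (j : ℕ) (hj : 2 * j ≤ q - 1)
    (r : ℤ)
    (hr : (Nat.factorial j : ℤ) * (Nat.factorial (q - 1 - 2 * j) : ℤ) * r
            = (Nat.factorial (q - 2 - j) : ℤ)) :
    (((-1 : ℤ) ^ j * ((q : ℤ) - 1) * r : ℤ) : ZMod p) = (catalan j : ZMod p) := by
  have hq2 : 2 ≤ q := hq ▸ hp.two_le.trans (Nat.le_self_pow (by omega) p)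
  obtain ⟨m, hm⟩ : ∃ m, q = m + 2 * j + 1 := ⟨q - 1 - 2 * j, by omega⟩
  have hq1 : (q : ℤ) - 1 = ((m + 2 * j : ℕ) : ℤ) := by rw [hm]; push_cast; ring
  rw [show q - 1 - 2 * j = m by omega] at hr
  rw [hq1]
  rcases j with _ | i
  · obtain ⟨m, rfl⟩ : ∃ m', m = m' + 1 := ⟨m - 1, by omega⟩
    rw [show q - 2 - 0 = m by omega, Nat.factorial_zero, Nat.cast_one, one_mul] at hr
    simpa using congrArg (Int.cast : ℤ → ZMod p) (Int.succ_mul_eq_one_of_factorial_mul_eq hr)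
  · rw [show q - 2 - (i + 1) = m + i by omega] at hr
    rw [show m + 2 * (i + 1) = m + 2 * i + 2 by ring, mul_assoc,
      Int.mul_eq_choose_add_choose_of_factorial_mul_eq hr]
    exact_mod_cast ZMod.neg_one_pow_mul_choose_add_choose_eq_catalan hp (e := e) (by omega)

/-- if `j!·((q−1)−2j)!·r = (q−2−j)!` in `ℤ`, then in `ℤ/pℤ`
`(−1)^j·(q−1)·r` equals the `j`-th Catalan number. -/
theorem statement_19
    (p : ℕ) (hp : p.Prime) (hodd : Odd p)
    (e : ℕ) (he : 1 ≤ e) (q : ℕ) (hq : q = p ^ e)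
    (j : ℕ) (hj : 2 * j ≤ q - 1)
    (r : ℤ)
    (hr : (Nat.factorial j : ℤ) * (Nat.factorial (q - 1 - 2 * j) : ℤ) * r
            = (Nat.factorial (q - 2 - j) : ℤ)) :
    (((-1 : ℤ) ^ j * ((q : ℤ) - 1) * r : ℤ) : ZMod p) = (catalan j : ZMod p) :=
  statement_19_general p hp e he q hq j hj r hr
end
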